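/- Bias of the TSLS estimand under an invalid instrument and unmeasured confounding (Equation (4)): let H be a real Hilbert space, X a complete subspace, and y, d, z, u ∈ H such that all residuals appearing below are nonzero and ⟨d^{⊥X}, z^{⊥X}⟩ ≠ 0 (in particular d^{⊥X+span(z)} ≠ 0, u^{⊥X+span(z)} ≠ 0, d^{⊥X+span(z)+span(u)} ≠ 0, y^{⊥X+span(z)+span(d)} ≠ 0, u^{⊥X+span(z)+span(d)} ≠ 0, z^{⊥X+span(d)} ≠ 0). Then β_{y∼d|X+span(z)+span(u)} = ⟨y^{⊥X}, z^{⊥X}⟩/⟨d^{⊥X}, z^{⊥X}⟩ − [f_{y∼z|X+span(d)}/R_{d∼z|X} + R_{y∼u|X+span(z)+span(d)}·f_{d∼u|X+span(z)}]·σ_{y∼X+span(z)+span(d)}/σ_{d∼X+span(z)}. -/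

import Mathlib

/-!
R²-calculus in real Hilbert spaces (Freidling & Zhao, "Optimization-based
Sensitivity Analysis for Unmeasured Confounding using Partial Correlations").

Each of the two bias terms comes from the normal equation of a regression on two regressors after
partialling out `M`: `⟪y^{⊥M}, d^{⊥M}⟫ = β_{y∼d|M+w} ‖d^{⊥M}‖² + β_{y∼w|M+d} ⟪w^{⊥M}, d^{⊥M}⟫`.
With `M = X + z`, `w = u` it is the omitted-variable-bias formula relating `β_{y∼d|X+z+u}` to
`β_{y∼d|X+z}`; with `M = X` and the roles of `d` and `z` exchanged it relates `β_{y∼d|X+z}` to the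
TSLS ratio. The R-, f- and σ-values are turned into inner products of residuals relative to `M` by
the Frisch–Waugh–Lovell formula for one added vector.
-/

noncomputable section

open Submodule RealInnerProductSpace

variable {H : Type*} [NormedAddCommGroup H] [InnerProductSpace ℝ H]

/-- The residual `h^{⊥M} = h − P_M h` of `h` after projecting onto `M`. -/
def resid (M : Submodule ℝ H) [HasOrthogonalProjection M] (h : H) : H :=
  h - (orthogonalProjection M h : H)

/-- The marginal R²-value `R²_{y∼X} = 1 − ‖y^{⊥X}‖²/‖y‖²`. -/
def R2 (y : H) (X : Submodule ℝ H) [HasOrthogonalProjection X] : ℝ :=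
  1 - ‖resid X y‖ ^ 2 / ‖y‖ ^ 2

/-- The partial R²-value `R²_{y∼X|Z} = (R²_{y∼X+Z} − R²_{y∼Z})/(1 − R²_{y∼Z})`. -/
def R2p (y : H) (X Z : Submodule ℝ H) [HasOrthogonalProjection (X ⊔ Z)]
    [HasOrthogonalProjection Z] : ℝ :=
  (R2 y (X ⊔ Z) - R2 y Z) / (1 - R2 y Z)

/-- The partial R-value `R_{y∼x|Z} = ⟪y^{⊥Z}, x^{⊥Z}⟫/(‖y^{⊥Z}‖·‖x^{⊥Z}‖)`. -/
def Rp (y x : H) (Z : Submodule ℝ H) [HasOrthogonalProjection Z] : ℝ :=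
  ⟪resid Z y, resid Z x⟫ / (‖resid Z y‖ * ‖resid Z x‖)

/-- The partial f-value `f_{y∼x|Z} = R_{y∼x|Z}/√(1 − R²_{y∼x|Z})`. -/
def fp (y x : H) (Z : Submodule ℝ H) [HasOrthogonalProjection Z] : ℝ :=
  Rp y x Z / Real.sqrt (1 - Rp y x Z ^ 2)

/-- The regression estimand `β_{y∼d|M} = ⟪y^{⊥M}, d^{⊥M}⟫/‖d^{⊥M}‖²`. -/
def betaReg (y d : H) (M : Submodule ℝ H) [HasOrthogonalProjection M] : ℝ :=
  ⟪resid M y, resid M d⟫ / ‖resid M d‖ ^ 2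

/-- `σ_{y∼M} = ‖y^{⊥M}‖`. -/
def sigv (y : H) (M : Submodule ℝ H) [HasOrthogonalProjection M] : ℝ :=
  ‖resid M y‖


section Residuals

variable (M : Submodule ℝ H) [HasOrthogonalProjection M]

lemma resid_eq_sub_starProjection (h : H) : resid M h = h - M.starProjection h := rfl

lemma resid_mem_orthogonal (h : H) : resid M h ∈ Mᗮ :=
  sub_starProjection_mem_orthogonal h

lemma inner_resid_left_of_mem_orthogonal (h : H) {v : H} (hv : v ∈ Mᗮ) :
    ⟪resid M h, v⟫ = ⟪h, v⟫ := by
  rw [resid_eq_sub_starProjection, inner_sub_left,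
    inner_right_of_mem_orthogonal (M.starProjection_apply_mem h) hv, sub_zero]

/-- Frisch–Waugh–Lovell for one added vector. -/
lemma resid_sup_span (w : H) [HasOrthogonalProjection (M ⊔ ℝ ∙ w)] (hw : resid M w ≠ 0)
    (h : H) :
    resid (M ⊔ ℝ ∙ w) h
      = resid M h - (⟪resid M h, resid M w⟫ / ‖resid M w‖ ^ 2) • resid M w := by
  set c := ⟪resid M h, resid M w⟫ / ‖resid M w‖ ^ 2
  have hr : resid M h - c • resid M w ∈ Mᗮ :=
    sub_mem (resid_mem_orthogonal M h) (smul_mem _ _ (resid_mem_orthogonal M w))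
  have hmem : M.starProjection h + c • resid M w ∈ M ⊔ ℝ ∙ w :=
    add_mem (mem_sup_left (M.starProjection_apply_mem h)) <| smul_mem _ _ <|
      sub_mem (mem_sup_right (mem_span_singleton_self w))
        (mem_sup_left (M.starProjection_apply_mem w))
  have hperp : resid M h - c • resid M w ∈ (M ⊔ ℝ ∙ w)ᗮ := by
    refine inf_orthogonal M _ ▸ ⟨hr, ?_⟩
    have hw2 : ‖resid M w‖ ^ 2 ≠ 0 := by positivity
    change _ ∈ (ℝ ∙ w)ᗮ
    rw [mem_orthogonal_singleton_iff_inner_right,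
      ← inner_resid_left_of_mem_orthogonal M w hr, inner_sub_right, real_inner_smul_right,
      real_inner_self_eq_norm_sq, real_inner_comm]
    exact sub_eq_zero.2 (div_mul_cancel₀ _ hw2).symm
  rw [resid_eq_sub_starProjection, eq_starProjection_of_mem_orthogonal' hmem hperp
    (by rw [resid_eq_sub_starProjection M h]; abel), resid_eq_sub_starProjection M h]
  abel

lemma resid_congr {N : Submodule ℝ H} [HasOrthogonalProjection N] (hMN : M = N) (h : H) :
    resid M h = resid N h := by
  subst hMN; rfl

variable (w : H) [HasOrthogonalProjection (M ⊔ ℝ ∙ w)]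

lemma inner_resid_sup_span (hw : resid M w ≠ 0) (a b : H) :
    ⟪resid (M ⊔ ℝ ∙ w) a, resid (M ⊔ ℝ ∙ w) b⟫
      = ⟪resid M a, resid M b⟫
        - ⟪resid M a, resid M w⟫ * ⟪resid M b, resid M w⟫ / ‖resid M w‖ ^ 2 := by
  have hw2 : ‖resid M w‖ ^ 2 ≠ 0 := by positivity
  rw [resid_sup_span M w hw, resid_sup_span M w hw, inner_sub_left, inner_sub_right,
    inner_sub_right, real_inner_smul_left, real_inner_smul_left, real_inner_smul_right,
    real_inner_smul_right, real_inner_self_eq_norm_sq, real_inner_comm (resid M w) (resid M b)]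
  field_simp
  ring

lemma norm_sq_resid_sup_span (hw : resid M w ≠ 0) (a : H) :
    ‖resid (M ⊔ ℝ ∙ w) a‖ ^ 2
      = ‖resid M a‖ ^ 2 - ⟪resid M a, resid M w⟫ ^ 2 / ‖resid M w‖ ^ 2 := by
  rw [← real_inner_self_eq_norm_sq, inner_resid_sup_span M w hw, real_inner_self_eq_norm_sq]
  ring

lemma norm_sq_mul_norm_sq_resid_sup_span (hw : resid M w ≠ 0) (a : H) :
    ‖resid M w‖ ^ 2 * ‖resid (M ⊔ ℝ ∙ w) a‖ ^ 2
      = ‖resid M w‖ ^ 2 * ‖resid M a‖ ^ 2 - ⟪resid M a, resid M w⟫ ^ 2 := by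
  rw [norm_sq_resid_sup_span M w hw]
  field_simp

/-- Both sides are the square root of the Gram determinant of the residuals of `v` and `w`. -/
lemma norm_resid_mul_norm_resid_sup_span_comm (v : H) [HasOrthogonalProjection (M ⊔ ℝ ∙ v)]
    (hv : resid M v ≠ 0) (hw : resid M w ≠ 0) :
    ‖resid M v‖ * ‖resid (M ⊔ ℝ ∙ v) w‖ = ‖resid M w‖ * ‖resid (M ⊔ ℝ ∙ w) v‖ := by
  rw [← sq_eq_sq₀ (by positivity) (by positivity), mul_pow, mul_pow,
    norm_sq_mul_norm_sq_resid_sup_span M v hv, norm_sq_mul_norm_sq_resid_sup_span M w hw,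
    real_inner_comm]
  ring

lemma resid_sup_span_ne_zero_comm (v : H) [HasOrthogonalProjection (M ⊔ ℝ ∙ v)]
    (hv : resid M v ≠ 0) (hw : resid M w ≠ 0) (hvw : resid (M ⊔ ℝ ∙ w) v ≠ 0) :
    resid (M ⊔ ℝ ∙ v) w ≠ 0 := by
  intro h0
  have hgram := norm_resid_mul_norm_resid_sup_span_comm M w v hv hw
  rw [h0, norm_zero, mul_zero, eq_comm, mul_eq_zero, norm_eq_zero, norm_eq_zero] at hgram
  tauto

lemma fp_eq_inner_div (a : H) (hw : resid M w ≠ 0) :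
    fp a w M = ⟪resid M a, resid M w⟫ / (‖resid M w‖ * ‖resid (M ⊔ ℝ ∙ w) a‖) := by
  by_cases ha : resid M a = 0
  · simp [fp, Rp, ha]
  have h1R : 1 - Rp a w M ^ 2 = (‖resid (M ⊔ ℝ ∙ w) a‖ / ‖resid M a‖) ^ 2 := by
    rw [Rp, div_pow, div_pow, norm_sq_resid_sup_span M w hw]
    field_simp
  rw [fp, h1R, Real.sqrt_sq (by positivity), Rp]
  field_simp

end Residuals

section Estimands

variable (M : Submodule ℝ H) [HasOrthogonalProjection M] (y d : H)

/-- The TSLS (instrumental-variable) estimand of the effect of `d` on `y` with instrument `z`. -/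
def tslsEstimand (z : H) : ℝ := ⟪resid M y, resid M z⟫ / ⟪resid M d, resid M z⟫

/-- The normal equation of the regression of `y` on `d` and `w` after partialling out `M`. -/
lemma inner_resid_eq_betaReg_add_betaReg (w : H) [HasOrthogonalProjection (M ⊔ ℝ ∙ w)]
    [HasOrthogonalProjection (M ⊔ ℝ ∙ d)]
    (hd : resid M d ≠ 0) (hw : resid M w ≠ 0) (hd' : resid (M ⊔ ℝ ∙ w) d ≠ 0) :
    ⟪resid M y, resid M d⟫ = betaReg y d (M ⊔ ℝ ∙ w) * ‖resid M d‖ ^ 2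
      + betaReg y w (M ⊔ ℝ ∙ d) * ⟪resid M w, resid M d⟫ := by
  have hgram : ‖resid M w‖ ^ 2 * ‖resid M d‖ ^ 2 - ⟪resid M d, resid M w⟫ ^ 2 ≠ 0 := by
    rw [← norm_sq_mul_norm_sq_resid_sup_span M w hw]
    positivity
  rw [betaReg, betaReg, inner_resid_sup_span M w hw, inner_resid_sup_span M d hd,
    norm_sq_resid_sup_span M w hw, norm_sq_resid_sup_span M d hd,
    real_inner_comm (resid M d) (resid M w)]
  field_simp
  ring

lemma betaReg_sup_span_eq_betaReg_sub (u : H) [HasOrthogonalProjection (M ⊔ ℝ ∙ u)]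
    [HasOrthogonalProjection (M ⊔ ℝ ∙ d)]
    (hd : resid M d ≠ 0) (hu : resid M u ≠ 0) (hd' : resid (M ⊔ ℝ ∙ u) d ≠ 0)
    (hy : resid (M ⊔ ℝ ∙ d) y ≠ 0) :
    betaReg y d (M ⊔ ℝ ∙ u) = betaReg y d M -
      Rp y u (M ⊔ ℝ ∙ d) * fp d u M * (sigv y (M ⊔ ℝ ∙ d) / sigv d M) := by
  have hnormal := inner_resid_eq_betaReg_add_betaReg M y d u hd hu hd'
  simp only [betaReg] at hnormal ⊢
  rw [hnormal, real_inner_comm (resid M d) (resid M u), fp_eq_inner_div M u d hu,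
    ← norm_resid_mul_norm_resid_sup_span_comm M u d hd hu, Rp, sigv, sigv]
  field_simp
  ring

lemma betaReg_sup_span_eq_tslsEstimand_sub (z : H) [HasOrthogonalProjection (M ⊔ ℝ ∙ z)]
    [HasOrthogonalProjection (M ⊔ ℝ ∙ d)] [HasOrthogonalProjection (M ⊔ ℝ ∙ z ⊔ ℝ ∙ d)]
    (hd : resid M d ≠ 0) (hz : resid M z ≠ 0) (hdz : ⟪resid M d, resid M z⟫ ≠ 0)
    (hd' : resid (M ⊔ ℝ ∙ z) d ≠ 0) (hy : resid (M ⊔ ℝ ∙ z ⊔ ℝ ∙ d) y ≠ 0) :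
    betaReg y d (M ⊔ ℝ ∙ z) = tslsEstimand M y d z -
      fp y z (M ⊔ ℝ ∙ d) / Rp d z M * (sigv y (M ⊔ ℝ ∙ z ⊔ ℝ ∙ d) / sigv d (M ⊔ ℝ ∙ z)) := by
  have hcomm : M ⊔ ℝ ∙ z ⊔ ℝ ∙ d = M ⊔ ℝ ∙ d ⊔ ℝ ∙ z := sup_right_comm _ _ _
  have : HasOrthogonalProjection (M ⊔ ℝ ∙ d ⊔ ℝ ∙ z) := hcomm ▸ inferInstance
  have hz' := resid_sup_span_ne_zero_comm M z d hd hz hd'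
  have hnormal := inner_resid_eq_betaReg_add_betaReg M y z d hz hd hz'
  simp only [betaReg] at hnormal ⊢
  have hgram : ‖resid (M ⊔ ℝ ∙ d) z‖ = ‖resid M z‖ * ‖resid (M ⊔ ℝ ∙ z) d‖ / ‖resid M d‖ := by
    rw [eq_div_iff (by positivity), mul_comm, norm_resid_mul_norm_resid_sup_span_comm M z d hd hz]
  rw [tslsEstimand, hnormal, fp_eq_inner_div (M ⊔ ℝ ∙ d) z y hz',
    resid_congr (M ⊔ ℝ ∙ d ⊔ ℝ ∙ z) hcomm.symm y, Rp, sigv, sigv, hgram]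
  field_simp
  ring

end Estimands

theorem tsls_bias_general
    (X : Submodule ℝ H) [CompleteSpace X] (y d z u : H)
    [CompleteSpace ↥(X ⊔ (ℝ ∙ z))] [CompleteSpace ↥(X ⊔ (ℝ ∙ d))]
    [CompleteSpace ↥(X ⊔ (ℝ ∙ z) ⊔ (ℝ ∙ d))] [CompleteSpace ↥(X ⊔ (ℝ ∙ z) ⊔ (ℝ ∙ u))]
    (hd : resid X d ≠ 0) (hz : resid X z ≠ 0)
    (hdz : ⟪resid X d, resid X z⟫ ≠ 0)
    (hd2 : resid (X ⊔ (ℝ ∙ z)) d ≠ 0) (hu2 : resid (X ⊔ (ℝ ∙ z)) u ≠ 0)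
    (hd3 : resid (X ⊔ (ℝ ∙ z) ⊔ (ℝ ∙ u)) d ≠ 0)
    (hy3 : resid (X ⊔ (ℝ ∙ z) ⊔ (ℝ ∙ d)) y ≠ 0) :
    betaReg y d (X ⊔ (ℝ ∙ z) ⊔ (ℝ ∙ u)) =
      ⟪resid X y, resid X z⟫ / ⟪resid X d, resid X z⟫ -
        (fp y z (X ⊔ (ℝ ∙ d)) / Rp d z X +
            Rp y u (X ⊔ (ℝ ∙ z) ⊔ (ℝ ∙ d)) * fp d u (X ⊔ (ℝ ∙ z))) *
          (sigv y (X ⊔ (ℝ ∙ z) ⊔ (ℝ ∙ d)) / sigv d (X ⊔ (ℝ ∙ z))) := by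
  rw [betaReg_sup_span_eq_betaReg_sub (X ⊔ ℝ ∙ z) y d u hd2 hu2 hd3 hy3,
    betaReg_sup_span_eq_tslsEstimand_sub X y d z hd hz hdz hd2 hy3, tslsEstimand]
  ring

/-- bias of the TSLS estimand under an invalid instrument and
unmeasured confounding (Equation (4)). -/
theorem tsls_bias [CompleteSpace H]
    (X : Submodule ℝ H) [CompleteSpace X] (y d z u : H)
    [CompleteSpace ↥(X ⊔ (ℝ ∙ z))] [CompleteSpace ↥(X ⊔ (ℝ ∙ d))]
    [CompleteSpace ↥(X ⊔ (ℝ ∙ z) ⊔ (ℝ ∙ d))] [CompleteSpace ↥(X ⊔ (ℝ ∙ z) ⊔ (ℝ ∙ u))]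
    (hy : resid X y ≠ 0) (hd : resid X d ≠ 0) (hz : resid X z ≠ 0) (hu : resid X u ≠ 0)
    (hdz : ⟪resid X d, resid X z⟫ ≠ 0)
    (hd2 : resid (X ⊔ (ℝ ∙ z)) d ≠ 0) (hu2 : resid (X ⊔ (ℝ ∙ z)) u ≠ 0)
    (hd3 : resid (X ⊔ (ℝ ∙ z) ⊔ (ℝ ∙ u)) d ≠ 0)
    (hy2 : resid (X ⊔ (ℝ ∙ d)) y ≠ 0) (hz2 : resid (X ⊔ (ℝ ∙ d)) z ≠ 0)
    (hy3 : resid (X ⊔ (ℝ ∙ z) ⊔ (ℝ ∙ d)) y ≠ 0)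
    (hu3 : resid (X ⊔ (ℝ ∙ z) ⊔ (ℝ ∙ d)) u ≠ 0) :
    betaReg y d (X ⊔ (ℝ ∙ z) ⊔ (ℝ ∙ u)) =
      ⟪resid X y, resid X z⟫ / ⟪resid X d, resid X z⟫ -
        (fp y z (X ⊔ (ℝ ∙ d)) / Rp d z X +
            Rp y u (X ⊔ (ℝ ∙ z) ⊔ (ℝ ∙ d)) * fp d u (X ⊔ (ℝ ∙ z))) *
          (sigv y (X ⊔ (ℝ ∙ z) ⊔ (ℝ ∙ d)) / sigv d (X ⊔ (ℝ ∙ z))) :=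
  tsls_bias_general X y d z u hd hz hdz hd2 hu2 hd3 hy3
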